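/- arXiv:math/0507142 — 2 statements merged into one kernel-verified Lean document; each statement's English description precedes it below -/
import Mathlib

section
/- In the stick percolation model, the percolation event E (that the union of the sticks contains a half-line) has probability 0 or 1: P(E) = 0 or P(E) = 1. -/
open MeasureTheory ProbabilityTheory

/-- The stick percolation model: i.i.d. exponential(lam) spacings `X i` between the
seeds, i.i.d. stick lengths `S i` with law `μ`, the two families being mutually
independent. -/
structure StickModel {Ω : Type} [MeasurableSpace Ω] (P : Measure Ω)
    (lam : ℝ) (μ : Measure ℝ) where
  X : ℕ → Ω → ℝ
  S : ℕ → Ω → ℝ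
  measX : ∀ i, Measurable (X i)
  measS : ∀ i, Measurable (S i)
  distX : ∀ i, P.map (X i) = expMeasure lam
  distS : ∀ i, P.map (S i) = μ
  indep : iIndepFun (Sum.elim X S) P

/-- The `n`-th seed `x_n = X_0 + ⋯ + X_n`. -/
noncomputable def StickModel.seed {Ω : Type} [MeasurableSpace Ω] {P : Measure Ω}
    {lam : ℝ} {μ : Measure ℝ} (M : StickModel P lam μ) (n : ℕ) (ω : Ω) : ℝ :=
  ∑ i ∈ Finset.range (n + 1), M.X i ω

/-- The percolation event: the union of the sticks `[x_n, x_n + S_n]` contains a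
half-line `[a, ∞)`. -/
def StickModel.Percolates {Ω : Type} [MeasurableSpace Ω] {P : Measure Ω}
    {lam : ℝ} {μ : Measure ℝ} (M : StickModel P lam μ) (ω : Ω) : Prop :=
  ∃ a : ℝ, Set.Ici a ⊆ ⋃ n : ℕ, Set.Icc (M.seed n ω) (M.seed n ω + M.S n ω)

/-!
Almost surely the seeds increase to infinity (their gaps are nonnegative, and infinitely many of
them exceed `1` by the second Borel–Cantelli lemma). For such seeds the sticks cover a half-line
iff, from some index on, every seed `x (k + 1)` lies in a stick issued from an earlier seed; and
sticks issued before any fixed index `n` cannot matter, since they end below the seeds far out.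
The percolation event is therefore a.s. equal to an event that depends only on `(X i, S i)` for
`i ≥ n`, for every `n`: a tail event of an independent sequence, so Kolmogorov's 0-1 law applies.
-/

open Filter Set

section Sticks

variable {x S : ℕ → ℝ}

theorem eventually_exists_le_add_of_Ici_subset (hx : Monotone x)
    (hx' : Tendsto x atTop atTop) {a : ℝ} (ha : Ici a ⊆ ⋃ k, Icc (x k) (x k + S k)) (n : ℕ) :
    ∀ᶠ k in atTop, ∃ j ∈ Finset.Icc n k, x (k + 1) ≤ x j + S j := by
  obtain ⟨b, hb⟩ : BddAbove ((fun j => x j + S j) '' Iio n) := ((finite_Iio n).image _).bddAbove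
  filter_upwards [(hx'.comp (tendsto_add_atTop_nat 1)).eventually_gt_atTop (max a b)] with k hk
  rw [Function.comp_apply, max_lt_iff] at hk
  have hcover : Ico a (x (k + 1)) ⊆ ⋃ j ∈ Finset.range (k + 1), Icc (x j) (x j + S j) := by
    intro y hy
    obtain ⟨j, hj⟩ := mem_iUnion.1 (ha hy.1)
    have hjk : j < k + 1 := lt_of_not_ge fun h => (hy.2.trans_le (hx h)).not_ge hj.1
    exact mem_biUnion (Finset.mem_range.2 hjk) hj
  -- the covered set up to the seed `x (k + 1)` is closed, so it contains that seed
  have hclosed : IsClosed (⋃ j ∈ Finset.range (k + 1), Icc (x j) (x j + S j)) :=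
    isClosed_biUnion_finset fun j _ => isClosed_Icc
  have hmem := hclosed.closure_subset_iff.2 hcover
    (by rw [closure_Ico hk.1.ne]; exact right_mem_Icc.2 hk.1.le)
  obtain ⟨j, hj, hxj⟩ := mem_iUnion₂.1 hmem
  have hnj : n ≤ j := le_of_not_gt fun h => (hb ⟨j, h, rfl⟩).not_gt (hk.2.trans_le hxj.2)
  exact ⟨j, Finset.mem_Icc.2 ⟨hnj, Nat.lt_succ_iff.1 (Finset.mem_range.1 hj)⟩, hxj.2⟩

theorem exists_Ici_subset_of_eventually_exists_le_add (hx : Monotone x)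
    (hx' : Tendsto x atTop atTop) (h : ∀ᶠ k in atTop, ∃ j ≤ k, x (k + 1) ≤ x j + S j) :
    ∃ a, Ici a ⊆ ⋃ k, Icc (x k) (x k + S k) := by
  obtain ⟨N, hN⟩ := eventually_atTop.1 h
  refine ⟨x N, fun y hy => ?_⟩
  have hex : ∃ m, y < x m := (hx'.eventually_gt_atTop y).exists
  -- `k + 1` is the first seed beyond `y`, so `x k ≤ y < x (k + 1)`
  obtain ⟨k, hk⟩ : ∃ k, Nat.find hex = k + 1 :=
    Nat.exists_eq_succ_of_ne_zero fun h0 =>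
      (h0 ▸ Nat.find_spec hex).not_ge ((hx N.zero_le).trans hy)
  have hyk : x k ≤ y := not_lt.1 (Nat.find_min hex (by omega))
  have hNk : N ≤ k := le_of_not_gt fun h => (hk ▸ Nat.find_spec hex).not_ge ((hx h).trans hy)
  obtain ⟨j, hjk, hj⟩ := hN k hNk
  exact mem_iUnion.2 ⟨j, (hx hjk).trans hyk, (hk ▸ Nat.find_spec hex).le.trans hj⟩

theorem exists_Ici_subset_iUnion_Icc_iff (hx : Monotone x) (hx' : Tendsto x atTop atTop)
    (n : ℕ) : (∃ a, Ici a ⊆ ⋃ k, Icc (x k) (x k + S k)) ↔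
      ∀ᶠ k in atTop, ∃ j ∈ Finset.Icc n k, x (k + 1) ≤ x j + S j := by
  refine ⟨fun ⟨a, ha⟩ => eventually_exists_le_add_of_Ici_subset hx hx' ha n, fun h => ?_⟩
  refine exists_Ici_subset_of_eventually_exists_le_add hx hx' (h.mono fun k => ?_)
  rintro ⟨j, hj, hle⟩
  exact ⟨j, (Finset.mem_Icc.1 hj).2, hle⟩

end Sticks

/-- With seeds `x k = ∑ i ≤ k, X i`, the sum is `x (k + 1) - x j`: eventually every seed
`x (k + 1)` lies in a stick issued from a seed `x j` with `n ≤ j ≤ k`. -/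
def EventuallyCoveredFrom (X S : ℕ → ℝ) (n : ℕ) : Prop :=
  ∀ᶠ k in atTop, ∃ j ∈ Finset.Icc n k, ∑ i ∈ Finset.Ico (j + 1) (k + 2), X i ≤ S j

theorem EventuallyCoveredFrom.mono {X S : ℕ → ℝ} {n n' : ℕ} (h : EventuallyCoveredFrom X S n')
    (hn : n ≤ n') : EventuallyCoveredFrom X S n :=
  Eventually.mono h fun _ ⟨j, hj, hle⟩ =>
    ⟨j, Finset.mem_Icc.2 ⟨hn.trans (Finset.mem_Icc.1 hj).1, (Finset.mem_Icc.1 hj).2⟩, hle⟩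

theorem measurableSet_eventuallyCoveredFrom {Ω : Type*} {m : MeasurableSpace Ω}
    {X S : ℕ → Ω → ℝ} {n : ℕ} (hX : ∀ i, n ≤ i → Measurable (X i))
    (hS : ∀ j, n ≤ j → Measurable (S j)) :
    MeasurableSet {ω | EventuallyCoveredFrom (X · ω) (S · ω) n} := by
  simp only [EventuallyCoveredFrom, eventually_atTop, ofPred_exists, ofPred_forall]
  refine .iUnion fun N => .iInter fun k => .iInter fun _ => .iUnion fun j => ?_
  by_cases hj : j ∈ Finset.Icc n k
  · simp only [hj, true_and]
    refine measurableSet_le (Finset.measurable_sum _ fun i hi => hX i ?_)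
      (hS j (Finset.mem_Icc.1 hj).1)
    have := (Finset.mem_Icc.1 hj).1
    have := (Finset.mem_Ico.1 hi).1
    omega
  · simp [hj]

theorem exists_Ici_subset_iff_eventuallyCoveredFrom {X S : ℕ → ℝ} (hX : ∀ i, 0 ≤ X i)
    (hX' : Tendsto (fun n => ∑ i ∈ Finset.range n, X i) atTop atTop) (n : ℕ) :
    (∃ a, Ici a ⊆ ⋃ k, Icc (∑ i ∈ Finset.range (k + 1), X i)
      (∑ i ∈ Finset.range (k + 1), X i + S k)) ↔ EventuallyCoveredFrom X S n := by
  have hmono : Monotone fun k => ∑ i ∈ Finset.range (k + 1), X i := fun k l hkl =>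
    Finset.sum_le_sum_of_subset_of_nonneg (Finset.range_subset_range.2 (by omega))
      fun i _ _ => hX i
  rw [exists_Ici_subset_iUnion_Icc_iff hmono (hX'.comp (tendsto_add_atTop_nat 1)) n]
  refine eventually_congr (Eventually.of_forall fun k =>
    exists_congr fun j => and_congr_right fun hj => ?_)
  rw [Finset.sum_Ico_eq_sub _ (by have := (Finset.mem_Icc.1 hj).2; omega), sub_le_iff_le_add']

lemma expMeasure_Ioi {r x : ℝ} (hr : 0 < r) (hx : 0 ≤ x) :
    expMeasure r (Ioi x) = ENNReal.ofReal (Real.exp (-(r * x))) := by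
  have := isProbabilityMeasure_expMeasure hr
  have hexp : Real.exp (-(r * x)) ≤ 1 := Real.exp_le_one_iff.2 (by nlinarith)
  rw [← compl_Iic, prob_compl_eq_one_sub measurableSet_Iic, ← ofReal_cdf, cdf_expMeasure_eq hr,
    if_pos hx, ← ENNReal.ofReal_one, ← ENNReal.ofReal_sub _ (by linarith), sub_sub_cancel]

lemma expMeasure_Iic_zero {r : ℝ} (hr : 0 < r) : expMeasure r (Iic 0) = 0 := by
  have := isProbabilityMeasure_expMeasure hr
  rw [← ofReal_cdf, cdf_expMeasure_eq hr, if_pos le_rfl]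
  simp

theorem ae_tendsto_sum_range_atTop {Ω : Type*} {m : MeasurableSpace Ω} {P : Measure Ω}
    {X : ℕ → Ω → ℝ} (hXm : ∀ i, Measurable (X i)) (hX : iIndepFun X P)
    (hnonneg : ∀ᵐ ω ∂P, ∀ i, 0 ≤ X i ω) {c : ℝ} (hc : 0 < c)
    (hsum : ∑' i, P (X i ⁻¹' Ici c) = ⊤) :
    ∀ᵐ ω ∂P, Tendsto (fun n => ∑ i ∈ Finset.range n, X i ω) atTop atTop := by
  have hmeas : ∀ i, MeasurableSet (X i ⁻¹' Ici c) := fun i => hXm i measurableSet_Ici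
  have hindep : iIndepSet (fun i => X i ⁻¹' Ici c) P :=
    iIndepSets.iIndepSet_of_mem (π := fun i => {t | MeasurableSet[.comap (X i) inferInstance] t})
      (fun i => ⟨Ici c, measurableSet_Ici, rfl⟩) hmeas hX.iIndep
  have := hindep.isProbabilityMeasure
  have hfreq : ∀ᵐ ω ∂P, ω ∈ limsup (fun i => X i ⁻¹' Ici c) atTop :=
    (mem_ae_iff_prob_eq_one (MeasurableSet.measurableSet_limsup hmeas)).2
      (measure_limsup_eq_one hmeas hindep hsum)
  filter_upwards [hnonneg, hfreq] with ω h0 hf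
  rw [← not_summable_iff_tendsto_nat_atTop_of_nonneg h0]
  intro hsummable
  obtain ⟨i, hci, hic⟩ := ((mem_limsup_iff_frequently_mem.1 hf).and_eventually
    (hsummable.tendsto_atTop_zero.eventually (gt_mem_nhds hc))).exists
  exact (mem_Ici.1 hci).not_gt hic

namespace StickModel

variable {Ω : Type} [MeasurableSpace Ω] {P : Measure Ω} {lam : ℝ} {μ : Measure ℝ}
  (M : StickModel P lam μ)

/-- The sequence `X 0, S 0, X 1, S 1, …`, indexed by `ℕ` so that Kolmogorov's 0-1 law for
`atTop` applies to it. -/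
def interleaved : ℕ → Ω → ℝ := Sum.elim M.X M.S ∘ Equiv.natSumNatEquivNat.symm

theorem interleaved_two_mul (i : ℕ) : M.interleaved (2 * i) = M.X i := by
  simp [interleaved]

theorem interleaved_two_mul_add_one (i : ℕ) : M.interleaved (2 * i + 1) = M.S i := by
  simp [interleaved]

theorem measurable_interleaved (m : ℕ) : Measurable (M.interleaved m) := by
  rcases Nat.even_or_odd' m with ⟨i, rfl | rfl⟩
  · rw [interleaved_two_mul]; exact M.measX i
  · rw [interleaved_two_mul_add_one]; exact M.measS i

theorem iIndepFun_interleaved : iIndepFun M.interleaved P :=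
  M.indep.precomp (g := Equiv.natSumNatEquivNat.symm) (Equiv.injective _)

theorem measure_preimage_X (i : ℕ) {A : Set ℝ} (hA : MeasurableSet A) :
    P (M.X i ⁻¹' A) = expMeasure lam A := by
  rw [← Measure.map_apply (M.measX i) hA, M.distX i]

theorem ae_nonneg_X (hlam : 0 < lam) : ∀ᵐ ω ∂P, ∀ i, 0 ≤ M.X i ω := by
  refine ae_all_iff.2 fun i => ?_
  have h0 : P (M.X i ⁻¹' Iic 0) = 0 := by
    rw [M.measure_preimage_X i measurableSet_Iic, expMeasure_Iic_zero hlam]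
  filter_upwards [measure_eq_zero_iff_ae_notMem.1 h0] with ω hω
  exact (not_le.1 hω).le

theorem ae_tendsto_sum_range_X (hlam : 0 < lam) :
    ∀ᵐ ω ∂P, Tendsto (fun n => ∑ i ∈ Finset.range n, M.X i ω) atTop atTop := by
  have hpos : expMeasure lam (Ici 1) ≠ 0 := by
    refine ne_bot_of_le_ne_bot ?_ (measure_mono Ioi_subset_Ici_self)
    simp [expMeasure_Ioi hlam zero_le_one, Real.exp_pos]
  refine ae_tendsto_sum_range_atTop M.measX (M.indep.precomp (g := Sum.inl) Sum.inl_injective)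
    (M.ae_nonneg_X hlam) one_pos ?_
  simp_rw [M.measure_preimage_X _ measurableSet_Ici]
  exact ENNReal.tsum_const_eq_top_of_ne_zero hpos

theorem setOf_percolates_ae_eq (hlam : 0 < lam) :
    {ω | M.Percolates ω} =ᵐ[P] {ω | ∀ n, EventuallyCoveredFrom (M.X · ω) (M.S · ω) n} := by
  refine eventuallyEq_set.2 ?_
  filter_upwards [M.ae_nonneg_X hlam, M.ae_tendsto_sum_range_X hlam] with ω h0 htend
  have h := exists_Ici_subset_iff_eventuallyCoveredFrom (S := (M.S · ω)) h0 htend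
  exact ⟨fun hp n => (h n).1 hp, fun hc => (h 0).2 (hc 0)⟩

theorem measurableSet_limsup_comap_interleaved :
    MeasurableSet[limsup (fun m => MeasurableSpace.comap (M.interleaved m) inferInstance) atTop]
      {ω | ∀ n, EventuallyCoveredFrom (M.X · ω) (M.S · ω) n} := by
  rw [limsup_eq_iInf_iSup_of_nat, MeasurableSpace.measurableSet_iInf]
  intro N
  have hmeas : ∀ m, N ≤ m →
      Measurable[⨆ m ≥ N, MeasurableSpace.comap (M.interleaved m) inferInstance]
        (M.interleaved m) := fun m hm =>
    (comap_measurable _).mono (le_iSup₂ (f := fun m (_ : m ≥ N) =>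
      MeasurableSpace.comap (M.interleaved m) inferInstance) m hm) le_rfl
  -- the condition is antitone in `n`, so imposing it for `n ≥ N` only gives the same event
  have hset : {ω | ∀ n, EventuallyCoveredFrom (M.X · ω) (M.S · ω) n} =
      ⋂ n, {ω | EventuallyCoveredFrom (M.X · ω) (M.S · ω) (n + N)} := by
    ext ω
    simp only [mem_ofPred_eq, mem_iInter]
    exact ⟨fun h n => h (n + N), fun h n => (h n).mono (Nat.le_add_right n N)⟩
  rw [hset]
  refine .iInter fun n => measurableSet_eventuallyCoveredFrom (fun i hi => ?_) (fun j hj => ?_)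
  · rw [← M.interleaved_two_mul]; exact hmeas _ (by omega)
  · rw [← M.interleaved_two_mul_add_one]; exact hmeas _ (by omega)

end StickModel

theorem stick_percolation_zero_one_general {Ω : Type} [MeasurableSpace Ω] (P : Measure Ω)
    [IsProbabilityMeasure P] (lam : ℝ) (hlam : 0 < lam) (μ : Measure ℝ)
    (M : StickModel P lam μ) :
    P {ω | M.Percolates ω} = 0 ∨ P {ω | M.Percolates ω} = 1 := by
  rw [measure_congr (M.setOf_percolates_ae_eq hlam)]
  exact measure_zero_or_one_of_measurableSet_limsup_atTop
    (fun m => (M.measurable_interleaved m).comap_le) M.iIndepFun_interleaved.iIndep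
    M.measurableSet_limsup_comap_interleaved

/-- The percolation event has probability zero or one. -/
theorem stick_percolation_zero_one {Ω : Type} [MeasurableSpace Ω] (P : Measure Ω)
    [IsProbabilityMeasure P] (lam : ℝ) (hlam : 0 < lam) (μ : Measure ℝ)
    [IsProbabilityMeasure μ] (hμ : μ (Set.Ioi (0 : ℝ)) = 1)
    (M : StickModel P lam μ) :
    P {ω | M.Percolates ω} = 0 ∨ P {ω | M.Percolates ω} = 1 :=
  stick_percolation_zero_one_general P lam hlam μ M
end

section
/- In the stick percolation model, the following two events coincide up to a set of probability zero: (i) the event E that ⋃_n Ŝ_n contains a half-line [a,∞) for some a ∈ ℝ; (ii) the event E′ that there exists a strictly increasing sequence (n_k)_{k∈ℕ} of indices with x_{n_{k+1}} < x_{n_k} + S_{n_k} for every k (an infinite chain of pairwise connected sticks). That is, P(E Δ E′) = 0. -/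
open MeasureTheory ProbabilityTheory

/-!
Almost surely three things hold: the seeds are nondecreasing (the spacings are nonnegative), they
tend to infinity (independent exponential spacings cannot all stay below a fixed level), and no
seed falls exactly on the right end of an earlier stick (the spacing just before the seed is
atomless and independent of everything that determines that right end). Under these conditions
the equivalence is deterministic. A chain covers `[x_{n_0}, ∞)` because consecutive sticks overlap
and the seeds go to infinity. Conversely, if `[a, ∞)` is covered, let `R t` be the farthest right
end of a stick seeded at or before `t`. Points just to the right of `t ≥ a` are covered by such a
stick, so `R t > t`, and the sticks realising `R t, R (R t), …` form a chain.
-/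

open Filter Set

section Deterministic

variable {x s : ℕ → ℝ}

theorem exists_Ici_subset_iUnion_of_chain (hx : Tendsto x atTop atTop) {f : ℕ → ℕ}
    (hf : StrictMono f) (hchain : ∀ k, x (f (k + 1)) < x (f k) + s (f k)) :
    ∃ a, Ici a ⊆ ⋃ n, Icc (x n) (x n + s n) := by
  refine ⟨x (f 0), fun t ht => ?_⟩
  by_contra hnot
  have hle : ∀ k, x (f k) ≤ t := by
    intro k
    induction k with
    | zero => exact ht
    | succ k ih =>
      have hend : x (f k) + s (f k) < t := by
        by_contra h
        exact hnot (mem_iUnion.2 ⟨f k, ih, not_lt.1 h⟩)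
      exact (hchain k).le.trans hend.le
  obtain ⟨k, hk⟩ := ((hx.comp hf.tendsto_atTop).eventually_gt_atTop t).exists
  exact (hle k).not_gt hk

theorem exists_farthest_reaching (hx : Tendsto x atTop atTop) {t : ℝ} {n₀ : ℕ}
    (hn₀ : x n₀ ≤ t) : ∃ n, x n ≤ t ∧ ∀ m, x m ≤ t → x m + s m ≤ x n + s n := by
  obtain ⟨N, hN⟩ := (hx.eventually_gt_atTop t).exists_forall_of_atTop
  have hfin : {m | x m ≤ t}.Finite :=
    (finite_Iio N).subset fun m hm => not_le.1 fun hNm => (hN m hNm).not_ge hm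
  exact exists_max_image _ (fun m => x m + s m) hfin ⟨n₀, hn₀⟩

theorem lt_add_of_farthest_reaching (hmono : Monotone x) (hx : Tendsto x atTop atTop) {a : ℝ}
    (hcov : Ici a ⊆ ⋃ n, Icc (x n) (x n + s n)) {t : ℝ} (ht : a ≤ t) {n : ℕ}
    (hn : ∀ m, x m ≤ t → x m + s m ≤ x n + s n) : t < x n + s n := by
  have hnext : ∃ q, t < x q := (hx.eventually_gt_atTop t).exists
  set q := Nat.find hnext
  -- no seed lies in `(t, u]`, so the stick covering `u` starts at or before `t`
  set u := (t + x q) / 2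
  have htu : t < u := by have := Nat.find_spec hnext; simp only [u]; linarith
  have huq : u < x q := by have := Nat.find_spec hnext; simp only [u]; linarith
  obtain ⟨j, hju, huj⟩ : ∃ j, x j ≤ u ∧ u ≤ x j + s j := by
    simpa using hcov (show u ∈ Ici a from ht.trans htu.le)
  have hjt : x j ≤ t := by
    by_contra! h
    exact (hju.trans_lt huq).not_ge (hmono (Nat.find_min' hnext h))
  exact htu.trans_le (huj.trans (hn j hjt))

theorem exists_chain_of_Ici_subset_iUnion (hmono : Monotone x) (hx : Tendsto x atTop atTop)
    (hne : ∀ m j, m < j → x j ≠ x m + s m) {a : ℝ}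
    (hcov : Ici a ⊆ ⋃ n, Icc (x n) (x n + s n)) :
    ∃ f : ℕ → ℕ, StrictMono f ∧ ∀ k, x (f (k + 1)) < x (f k) + s (f k) := by
  choose! g hg using fun t (ht : x 0 ≤ t) => exists_farthest_reaching (s := s) hx ht
  set reach : ℝ → ℝ := fun t => x (g t) + s (g t)
  have hreach : ∀ t, a ≤ t → x 0 ≤ t → t < reach t := fun t hat h0t =>
    lt_add_of_farthest_reaching hmono hx hcov hat (hg t h0t).2
  have hstep : ∀ t, a ≤ t → x 0 ≤ t → g t < g (reach t) ∧ x (g (reach t)) < reach t := by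
    intro t hat h0t
    have hlt := hreach t hat h0t
    have hlt' := hreach (reach t) (hat.trans hlt.le) (h0t.trans hlt.le)
    have hseed : x (g (reach t)) ≤ reach t := (hg _ (h0t.trans hlt.le)).1
    -- sticks seeded at or before `t` end by `reach t`, and `g (reach t)` ends beyond it
    have hgt : t < x (g (reach t)) := by
      by_contra! h
      exact hlt'.not_ge ((hg t h0t).2 _ h)
    have hmn : g t < g (reach t) := hmono.reflect_lt (((hg t h0t).1).trans_lt hgt)
    exact ⟨hmn, hseed.lt_of_ne (hne _ _ hmn)⟩
  set τ : ℕ → ℝ := fun k => reach^[k] (max a (x 0))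
  have hτ_succ : ∀ k, τ (k + 1) = reach (τ k) := fun k =>
    Function.iterate_succ_apply' reach k _
  have hτ : ∀ k, a ≤ τ k ∧ x 0 ≤ τ k := by
    intro k
    induction k with
    | zero => exact ⟨le_max_left _ _, le_max_right _ _⟩
    | succ k ih =>
      have := hreach _ ih.1 ih.2
      rw [hτ_succ]
      exact ⟨ih.1.trans this.le, ih.2.trans this.le⟩
  refine ⟨fun k => g (τ k), strictMono_nat_of_lt_succ fun k => ?_, fun k => ?_⟩
  · simpa only [hτ_succ] using (hstep _ (hτ k).1 (hτ k).2).1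
  · simpa only [hτ_succ] using (hstep _ (hτ k).1 (hτ k).2).2

theorem exists_Ici_subset_iUnion_iff_exists_chain (hmono : Monotone x)
    (hx : Tendsto x atTop atTop) (hne : ∀ m j, m < j → x j ≠ x m + s m) :
    (∃ a, Ici a ⊆ ⋃ n, Icc (x n) (x n + s n)) ↔
      ∃ f : ℕ → ℕ, StrictMono f ∧ ∀ k, x (f (k + 1)) < x (f k) + s (f k) :=
  ⟨fun ⟨_, hcov⟩ => exists_chain_of_Ici_subset_iUnion hmono hx hne hcov,
    fun ⟨_, hf, hchain⟩ => exists_Ici_subset_iUnion_of_chain hx hf hchain⟩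

end Deterministic

instance ProbabilityTheory.nullSingletonClass_expMeasure (r : ℝ) :
    NullSingletonClass (expMeasure r) :=
  nullSingletonClass_withDensity _

theorem ProbabilityTheory.expMeasure_Iio_zero (r : ℝ) : expMeasure r (Iio 0) = 0 := by
  rw [expMeasure, gammaMeasure, withDensity_apply _ measurableSet_Iio]
  exact lintegral_exponentialPDF_of_nonpos le_rfl

theorem ProbabilityTheory.expMeasure_Iic_lt_one {r : ℝ} (hr : 0 < r) (C : ℝ) :
    expMeasure r (Iic C) < 1 := by
  have := isProbabilityMeasure_expMeasure hr
  rw [← ofReal_cdf, cdf_expMeasure_eq hr, ENNReal.ofReal_lt_one]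
  split_ifs
  · linarith [Real.exp_pos (-(r * C))]
  · exact zero_lt_one

section Independence

variable {Ω : Type*} [MeasurableSpace Ω] {P : Measure Ω}

theorem ProbabilityTheory.IndepFun.measure_eq_eq_zero {α : Type*} [MeasurableSpace α]
    [MeasurableEq α] [IsFiniteMeasure P] {W Y : Ω → α} (h : IndepFun W Y P)
    (hW : Measurable W) (hY : Measurable Y) [NullSingletonClass (P.map Y)] :
    P {ω | W ω = Y ω} = 0 := by
  have hdiag : MeasurableSet {p : α × α | p.1 = p.2} := measurableSet_diagonal
  calc P {ω | W ω = Y ω} = P.map (fun ω => (W ω, Y ω)) {p | p.1 = p.2} :=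
        (Measure.map_apply (hW.prodMk hY) hdiag).symm
    _ = ((P.map W).prod (P.map Y)) {p | p.1 = p.2} := by
        rw [(indepFun_iff_map_prod_eq_prod_map_map hW.aemeasurable hY.aemeasurable).1 h]
    _ = 0 := by
        rw [Measure.prod_apply hdiag]
        simp [Set.preimage, measure_singleton]

theorem ProbabilityTheory.iIndepFun.measure_forall_mem_eq_zero {β : Type*}
    [MeasurableSpace β] {Y : ℕ → Ω → β} (h : iIndepFun Y P) {s : Set β} (hs : MeasurableSet s)
    {q : ENNReal} (hq : q < 1) (hY : ∀ i, P (Y i ⁻¹' s) ≤ q) :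
    P {ω | ∀ i, Y i ω ∈ s} = 0 := by
  have hbound : ∀ n, P {ω | ∀ i, Y i ω ∈ s} ≤ q ^ n := fun n => calc
    P {ω | ∀ i, Y i ω ∈ s} ≤ P (⋂ i ∈ Finset.range n, Y i ⁻¹' s) :=
      measure_mono fun ω hω => mem_iInter₂.2 fun i _ => hω i
    _ = ∏ i ∈ Finset.range n, P (Y i ⁻¹' s) := h.meas_biInter fun i _ => ⟨s, hs, rfl⟩
    _ ≤ q ^ n := by
      simpa using Finset.prod_le_prod' (s := Finset.range n) fun i _ => hY i
  exact le_zero_iff.1 (ge_of_tendsto' (ENNReal.tendsto_pow_atTop_nhds_zero_of_lt_one hq) hbound)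

end Independence

namespace StickModel

variable {Ω : Type} [MeasurableSpace Ω] {P : Measure Ω} {lam : ℝ} {μ : Measure ℝ}
  (M : StickModel P lam μ)

theorem measure_X_preimage (i : ℕ) {s : Set ℝ} (hs : MeasurableSet s) :
    P (M.X i ⁻¹' s) = expMeasure lam s := by
  rw [← Measure.map_apply (M.measX i) hs, M.distX i]

theorem iIndepFun_X : iIndepFun M.X P :=
  M.indep.precomp Sum.inl_injective (g := Sum.inl)

theorem seed_succ (n : ℕ) (ω : Ω) : M.seed (n + 1) ω = M.seed n ω + M.X (n + 1) ω :=
  Finset.sum_range_succ _ _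

theorem seed_eq_add_sum_Ico {m j : ℕ} (h : m < j) (ω : Ω) :
    M.seed j ω = M.seed m ω + ∑ i ∈ Finset.Ico (m + 1) j, M.X i ω + M.X j ω := by
  rw [seed, Finset.sum_range_succ, seed, Finset.sum_range_add_sum_Ico _ h]

theorem ae_X_nonneg : ∀ᵐ ω ∂P, ∀ i, 0 ≤ M.X i ω := by
  refine ae_all_iff.2 fun i => ?_
  simp only [ae_iff, not_le]
  exact (M.measure_X_preimage i measurableSet_Iio).trans (expMeasure_Iio_zero lam)

theorem monotone_seed {ω : Ω} (hω : ∀ i, 0 ≤ M.X i ω) : Monotone (M.seed · ω) :=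
  monotone_nat_of_le_succ fun n => by
    rw [seed_succ]
    linarith [hω (n + 1)]

theorem X_le_seed {ω : Ω} (hω : ∀ i, 0 ≤ M.X i ω) (i : ℕ) : M.X i ω ≤ M.seed i ω :=
  Finset.single_le_sum (f := (M.X · ω)) (fun k _ => hω k) (Finset.self_mem_range_succ i)

theorem ae_tendsto_seed (hlam : 0 < lam) : ∀ᵐ ω ∂P, Tendsto (M.seed · ω) atTop atTop := by
  have hexceed : ∀ C : ℕ, ∀ᵐ ω ∂P, ∃ i, (C : ℝ) < M.X i ω := fun C => by
    simp only [ae_iff, not_exists, not_lt]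
    exact M.iIndepFun_X.measure_forall_mem_eq_zero measurableSet_Iic
      (expMeasure_Iic_lt_one hlam C) fun i => (M.measure_X_preimage i measurableSet_Iic).le
  filter_upwards [M.ae_X_nonneg, ae_all_iff.2 hexceed] with ω hω hexceed
  refine tendsto_atTop_atTop_of_monotone (M.monotone_seed hω) fun b => ?_
  obtain ⟨i, hi⟩ := hexceed ⌈b⌉₊
  exact ⟨i, (Nat.le_ceil b).trans (hi.le.trans (M.X_le_seed hω i))⟩

theorem ae_seed_ne_seed_add_S {m j : ℕ} (h : m < j) :
    ∀ᵐ ω ∂P, M.seed j ω ≠ M.seed m ω + M.S m ω := by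
  have := M.indep.isProbabilityMeasure
  -- the event is `X j = -∑ k ∈ A, G k ω`, and the right side does not involve `X j`
  set G : ℕ ⊕ ℕ → Ω → ℝ := Sum.elim M.X fun i ω => -M.S i ω
  have hG : iIndepFun G P := by
    convert M.indep.comp (Sum.elim (fun _ => id) fun _ => Neg.neg)
      (by rintro (i | i); exacts [measurable_id, measurable_neg]) using 1
    funext k
    cases k <;> rfl
  have hGm : ∀ k, Measurable (G k) := by
    rintro (i | i)
    exacts [M.measX i, (M.measS i).neg]
  set A : Finset (ℕ ⊕ ℕ) :=
    insert (Sum.inr m) ((Finset.Ico (m + 1) j).map Function.Embedding.inl)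
  have hjA : Sum.inl j ∉ A := by simp [A]
  have hsum : ∀ ω, (∑ k ∈ A, G k) ω = ∑ i ∈ Finset.Ico (m + 1) j, M.X i ω - M.S m ω := by
    intro ω
    rw [Finset.sum_apply, Finset.sum_insert (by simp), Finset.sum_map]
    simp only [G, Function.Embedding.inl_apply, Sum.elim_inl, Sum.elim_inr]
    ring
  have hind : IndepFun (-∑ k ∈ A, G k) (M.X j) P :=
    (hG.indepFun_finsetSum_of_notMem hGm hjA).comp measurable_neg measurable_id
  have : NullSingletonClass (P.map (M.X j)) := by
    rw [M.distX j]
    infer_instance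
  have hW : Measurable (-∑ k ∈ A, G k) := by fun_prop
  rw [ae_iff]
  refine measure_mono_null (fun ω hω => ?_) (hind.measure_eq_eq_zero hW (M.measX j))
  rw [mem_ofPred_eq, not_not, M.seed_eq_add_sum_Ico h] at hω
  rw [mem_ofPred_eq, Pi.neg_apply, hsum]
  linarith

end StickModel

theorem stick_percolation_eq_chain_ae_general {Ω : Type} [MeasurableSpace Ω] (P : Measure Ω)
    (lam : ℝ) (hlam : 0 < lam) (μ : Measure ℝ)
    (M : StickModel P lam μ) :
    P (symmDiff {ω | M.Percolates ω}
        {ω | ∃ f : ℕ → ℕ, StrictMono f ∧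
          ∀ k : ℕ, M.seed (f (k + 1)) ω < M.seed (f k) ω + M.S (f k) ω}) = 0 := by
  have hne : ∀ᵐ ω ∂P, ∀ m j, m < j → M.seed j ω ≠ M.seed m ω + M.S m ω :=
    ae_all_iff.2 fun m => ae_all_iff.2 fun j =>
      eventually_imp_distrib_left.2 M.ae_seed_ne_seed_add_S
  rw [measure_symmDiff_eq_zero_iff, eventuallyEq_set]
  filter_upwards [M.ae_X_nonneg, M.ae_tendsto_seed hlam, hne] with ω hX htendsto hne
  exact exists_Ici_subset_iUnion_iff_exists_chain (M.monotone_seed hX) htendsto hne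

/-- Up to a set of probability zero, the event that the union of the sticks contains a
half-line coincides with the event that there is an infinite chain of pairwise
connected sticks. -/
theorem stick_percolation_eq_chain_ae {Ω : Type} [MeasurableSpace Ω] (P : Measure Ω)
    [IsProbabilityMeasure P] (lam : ℝ) (hlam : 0 < lam) (μ : Measure ℝ)
    [IsProbabilityMeasure μ] (hμ : μ (Set.Ioi (0 : ℝ)) = 1)
    (M : StickModel P lam μ) :
    P (symmDiff {ω | M.Percolates ω}
        {ω | ∃ f : ℕ → ℕ, StrictMono f ∧
          ∀ k : ℕ, M.seed (f (k + 1)) ω < M.seed (f k) ω + M.S (f k) ω}) = 0 :=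
  stick_percolation_eq_chain_ae_general P lam hlam μ M
end
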